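/- Let F₂ be the free group on x and y and let k ≥ 1 be odd, k ≥ 3. Define βₛ = x^{s-1}(xy³)x^{s-1} for 1 ≤ s ≤ k, β_{k+1} = y x^{k-1}(xy³)x^{k-1} x, and β_{k+t} = x^{-(t-1)} y x^{k} y³ x^{k} x^{t-1} for t ≥ 2. Then for any n ≥ k the elements β₁, ..., βₙ form a free basis of a free subgroup of F₂ of rank n. -/

import Mathlib

/-!
Ping-pong on reduced words. For `i < k` and for `k ≤ i` respectively,
`β k (i + 1) = (x^(i+1) y) (y² x^i)` and `β k (i + 1) = (x^-(i-k) y x^k y) (y² x^i)`, both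
products without cancellation; write them `A * B⁻¹` with `B = x^-i y^-2`. Such an element sends
everything whose reduced word does not start with `B` to something whose reduced word starts with
`A`, and its inverse `B * A⁻¹` does the reverse. The `2n` words `A`, `B` are pairwise incomparable
in the prefix order, being told apart by the length and sign of their leading `x`-run and the
letter after it, so the ping-pong lemma applies to the sets of elements whose reduced words start
with them.
-/

namespace Stmt15

abbrev F2 := FreeGroup (Fin 2)

def x : F2 := FreeGroup.of 0
def y : F2 := FreeGroup.of 1

def β (k s : ℕ) : F2 :=
  if s ≤ k then x ^ (s - 1) * (x * y ^ 3) * x ^ (s - 1)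
  else if s = k + 1 then y * x ^ (k - 1) * (x * y ^ 3) * x ^ (k - 1) * x
  else (x ^ (s - k - 1))⁻¹ * y * x ^ k * y ^ 3 * x ^ k * x ^ (s - k - 1)

end Stmt15

open scoped Pointwise

theorem List.eq_of_replicate_append_cons_prefix {α : Type*} {c d d' : α} {L L' : List α}
    (hd : d ≠ c) (hd' : d' ≠ c) :
    ∀ {m m' : ℕ}, replicate m c ++ d :: L <+: replicate m' c ++ d' :: L' → m = m' ∧ d = d'
  | 0, 0, h => ⟨rfl, (cons_prefix_cons.mp h).1⟩
  | 0, _ + 1, h => absurd (cons_prefix_cons.mp h).1 hd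
  | _ + 1, 0, h => absurd (cons_prefix_cons.mp h).1.symm hd'
  | _ + 1, _ + 1, h => by
    obtain ⟨hm, hdd⟩ := eq_of_replicate_append_cons_prefix hd hd' (cons_prefix_cons.mp h).2
    exact ⟨congrArg (· + 1) hm, hdd⟩

-- `FreeGroup.injective_lift_of_ping_pong` wants the index type and the group in one universe.
universe u

namespace FreeGroup

variable {α : Type u}

theorem head?_invRev (L : List (α × Bool)) :
    (invRev L).head? = L.getLast?.map fun a => (a.1, !a.2) := by
  simp [invRev, List.head?_reverse, List.getLast?_map]

theorem IsReduced.append_of_head?_eq {L M M' : List (α × Bool)} (h : IsReduced (L ++ M))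
    (hM' : IsReduced M') (hhead : M'.head? = M.head?) : IsReduced (L ++ M') := by
  unfold IsReduced at *
  rw [List.isChain_append] at h ⊢
  exact ⟨h.1, hM', hhead ▸ h.2.2⟩

variable [DecidableEq α]

theorem IsReduced.invRev {L : List (α × Bool)} (h : IsReduced L) : IsReduced (invRev L) :=
  isReduced_iff_reduce_eq.mpr (by rw [reduce_invRev, h.reduce_eq])

theorem toWord_mk_of_isReduced {L : List (α × Bool)} (h : IsReduced L) : (mk L).toWord = L := by
  rw [toWord_mk, h.reduce_eq]

theorem toWord_mul_of_isReduced {g h : FreeGroup α} (hgh : IsReduced (g.toWord ++ h.toWord)) :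
    (g * h).toWord = g.toWord ++ h.toWord := by
  rw [toWord_mul, hgh.reduce_eq]

theorem mk_replicate_true (a : α) (m : ℕ) : mk (List.replicate m (a, true)) = of a ^ m := by
  rw [← toWord_of_pow, mk_toWord]

theorem mk_replicate_false (a : α) (m : ℕ) :
    mk (List.replicate m (a, false)) = (of a ^ m)⁻¹ := by
  rw [← mk_replicate_true, inv_mk]
  simp [invRev]

theorem head?_toWord_inv_mul_of_not_prefix {b g : FreeGroup α} (hg : ¬ b.toWord <+: g.toWord) :
    (b⁻¹ * g).toWord.head? = b⁻¹.toWord.head? := by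
  by_contra hne
  apply hg
  -- otherwise `g = b * (b⁻¹ * g)` is a product without cancellation
  have hred : IsReduced (b.toWord ++ (b⁻¹ * g).toWord) := by
    unfold IsReduced
    rw [List.isChain_append]
    refine ⟨isReduced_toWord, isReduced_toWord, fun a ha c hc hac => ?_⟩
    rw [Option.mem_def] at ha hc
    rw [toWord_inv, head?_invRev, ha, hc] at hne
    by_contra hbc
    exact hne (by simp [hac, Bool.eq_not.mpr hbc])
  have hword := toWord_mul_of_isReduced hred
  rw [mul_inv_cancel_left] at hword
  exact hword ▸ List.prefix_append _ _

def cylinder (L : List (α × Bool)) : Set (FreeGroup α) := {g | L <+: g.toWord}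

theorem disjoint_cylinder {L M : List (α × Bool)} (hLM : ¬ L <+: M) (hML : ¬ M <+: L) :
    Disjoint (cylinder L) (cylinder M) :=
  Set.disjoint_left.mpr fun _ hL hM =>
    (List.prefix_or_prefix_of_prefix hL hM).elim hLM hML

theorem mul_inv_smul_compl_cylinder_subset {a b : FreeGroup α}
    (hab : IsReduced (a.toWord ++ b⁻¹.toWord)) :
    (a * b⁻¹) • (cylinder b.toWord)ᶜ ⊆ cylinder a.toWord := by
  rintro _ ⟨g, hg, rfl⟩
  have hred : IsReduced (a.toWord ++ (b⁻¹ * g).toWord) :=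
    hab.append_of_head?_eq isReduced_toWord (head?_toWord_inv_mul_of_not_prefix hg)
  show a.toWord <+: (a * b⁻¹ * g).toWord
  rw [mul_assoc, toWord_mul_of_isReduced hred]
  exact List.prefix_append _ _

theorem injective_lift_mk_append_invRev {ι : Type u} [Nontrivial ι] (P Q : ι → List (α × Bool))
    (hred : ∀ i, IsReduced (P i ++ invRev (Q i)))
    (hP : Pairwise fun i j => ¬ P i <+: P j) (hQ : Pairwise fun i j => ¬ Q i <+: Q j)
    (hPQ : ∀ i j, ¬ P i <+: Q j ∧ ¬ Q j <+: P i) :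
    Function.Injective (lift fun i => mk (P i ++ invRev (Q i))) := by
  have hwordP (i : ι) : (mk (P i)).toWord = P i :=
    toWord_mk_of_isReduced ((hred i).infix (List.prefix_append _ _).isInfix)
  have hwordQ (i : ι) : (mk (Q i)).toWord = Q i := by
    refine toWord_mk_of_isReduced ?_
    simpa only [invRev_invRev] using ((hred i).infix (List.suffix_append _ _).isInfix).invRev
  have hmk (i : ι) : mk (P i ++ invRev (Q i)) = mk (P i) * (mk (Q i))⁻¹ := by
    rw [inv_mk, mul_mk]
  refine injective_lift_of_ping_pong (fun i => mk (P i ++ invRev (Q i)))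
    (fun i => cylinder (P i)) (fun i => cylinder (Q i))
    (fun i => ⟨mk (P i), ?_⟩) (fun i j hij => ?_) (fun i j hij => ?_) (fun i j => ?_)
    (fun i => ?_) (fun i => ?_)
  · show P i <+: _
    rw [hwordP]
  · exact disjoint_cylinder (hP hij) (hP hij.symm)
  · exact disjoint_cylinder (hQ hij) (hQ hij.symm)
  · exact disjoint_cylinder (hPQ i j).1 (hPQ i j).2
  · have hsub := mul_inv_smul_compl_cylinder_subset (a := mk (P i)) (b := mk (Q i))
      (by rw [toWord_inv, hwordP, hwordQ]; exact hred i)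
    rwa [hwordP, hwordQ, ← hmk] at hsub
  · have hsub := mul_inv_smul_compl_cylinder_subset (a := mk (Q i)) (b := mk (P i))
      (by simpa only [toWord_inv, hwordP, hwordQ, invRev_append, invRev_invRev]
        using (hred i).invRev)
    rwa [hwordP, hwordQ, ← inv_inv (mk (Q i)), ← mul_inv_rev, ← hmk] at hsub

end FreeGroup

namespace Stmt15

open FreeGroup List

def attractingWord (k i : ℕ) : List (Fin 2 × Bool) :=
  if i < k then replicate (i + 1) (0, true) ++ [(1, true)]
  else replicate (i - k) (0, false) ++ [(1, true)] ++ replicate k (0, true) ++ [(1, true)]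

def repellingWord (i : ℕ) : List (Fin 2 × Bool) :=
  replicate i (0, false) ++ [(1, false), (1, false)]

theorem invRev_repellingWord (i : ℕ) :
    invRev (repellingWord i) = replicate 2 (1, true) ++ replicate i (0, true) := by
  simp [repellingWord, invRev]

theorem isReduced_attractingWord_append (k i : ℕ) :
    IsReduced (attractingWord k i ++ invRev (repellingWord i)) := by
  rw [invRev_repellingWord, attractingWord]
  split_ifs <;> simp [FreeGroup.IsReduced, isChain_append, isChain_cons, isChain_replicate_of_rel,
    head?_replicate, getLast?_replicate]
  split_ifs <;> simp

theorem β_succ {k : ℕ} (hk : 1 ≤ k) (i : ℕ) :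
    β k (i + 1) = mk (attractingWord k i ++ invRev (repellingWord i)) := by
  have hy : mk [((1 : Fin 2), true)] = y := rfl
  rw [invRev_repellingWord, attractingWord, β]
  rcases lt_or_ge i k with h | h
  · rw [if_pos h, if_pos (show i + 1 ≤ k by omega)]
    simp only [← mul_mk, mk_replicate_true, hy, Nat.add_sub_cancel]
    simp only [x, y]
    group
  · obtain ⟨u, rfl⟩ := Nat.exists_eq_add_of_le h
    rw [if_neg (show ¬ k + u < k by omega), if_neg (show ¬ k + u + 1 ≤ k by omega),
      show k + u - k = u by omega, show k + u + 1 - k - 1 = u by omega]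
    simp only [← mul_mk, mk_replicate_true, mk_replicate_false, hy]
    split_ifs with hu
    · obtain ⟨k, rfl⟩ := Nat.exists_eq_add_of_le' hk
      obtain rfl : u = 0 := by omega
      simp only [x, y, Nat.add_sub_cancel]
      group
    · simp only [x, y]
      group

theorem attractingWord_of_lt {k i : ℕ} (h : i < k) :
    attractingWord k i = (0, true) :: (replicate i (0, true) ++ [(1, true)]) := by
  rw [attractingWord, if_pos h, replicate_succ, cons_append]

theorem attractingWord_of_ge {k i : ℕ} (h : k ≤ i) :
    attractingWord k i =
      replicate (i - k) (0, false) ++ (1, true) :: (replicate k (0, true) ++ [(1, true)]) := by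
  rw [attractingWord, if_neg (not_lt.mpr h)]
  simp only [append_assoc, cons_append, nil_append]

theorem attractingWord_not_prefix {k i j : ℕ} (hij : i ≠ j) :
    ¬ attractingWord k i <+: attractingWord k j := by
  intro h
  rcases lt_or_ge i k with hi | hi <;> rcases lt_or_ge j k with hj | hj
  · rw [attractingWord, if_pos hi, attractingWord, if_pos hj] at h
    exact hij (by simpa using (eq_of_replicate_append_cons_prefix (by decide) (by decide) h).1)
  · rw [attractingWord_of_lt hi, attractingWord_of_ge hj] at h
    exact absurd (eq_of_replicate_append_cons_prefix (m := 0) (by decide) (by decide) h).2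
      (by decide)
  · rw [attractingWord_of_ge hi, attractingWord_of_lt hj] at h
    exact absurd (eq_of_replicate_append_cons_prefix (m' := 0) (by decide) (by decide) h).2
      (by decide)
  · rw [attractingWord_of_ge hi, attractingWord_of_ge hj] at h
    have := (eq_of_replicate_append_cons_prefix (by decide) (by decide) h).1
    omega

theorem repellingWord_not_prefix {i j : ℕ} (hij : i ≠ j) :
    ¬ repellingWord i <+: repellingWord j :=
  fun h => hij (eq_of_replicate_append_cons_prefix (by decide) (by decide) h).1

theorem attractingWord_not_prefix_repellingWord (k i j : ℕ) :
    ¬ attractingWord k i <+: repellingWord j ∧ ¬ repellingWord j <+: attractingWord k i := by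
  rcases lt_or_ge i k with hi | hi
  · rw [attractingWord_of_lt hi]
    exact ⟨fun h => absurd
        (eq_of_replicate_append_cons_prefix (m := 0) (by decide) (by decide) h).2 (by decide),
      fun h => absurd
        (eq_of_replicate_append_cons_prefix (m' := 0) (by decide) (by decide) h).2 (by decide)⟩
  · rw [attractingWord_of_ge hi]
    exact ⟨fun h => absurd
        (eq_of_replicate_append_cons_prefix (by decide) (by decide) h).2 (by decide),
      fun h => absurd
        (eq_of_replicate_append_cons_prefix (by decide) (by decide) h).2 (by decide)⟩

theorem stmt_15_general (k n : ℕ) (hk : 3 ≤ k) (hn : k ≤ n) :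
    Function.Injective (FreeGroup.lift fun i : Fin n => β k ((i : ℕ) + 1)) := by
  have : Nontrivial (Fin n) := Fin.nontrivial_iff_two_le.mpr (by omega)
  simp only [β_succ (show 1 ≤ k by omega)]
  exact injective_lift_mk_append_invRev _ _ (fun i => isReduced_attractingWord_append k i)
    (fun i j hij => attractingWord_not_prefix (Fin.val_injective.ne hij))
    (fun i j hij => repellingWord_not_prefix (Fin.val_injective.ne hij))
    (fun i j => attractingWord_not_prefix_repellingWord k i j)

theorem stmt_15 (k n : ℕ) (hk : 3 ≤ k) (hodd : Odd k) (hn : k ≤ n) :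
    Function.Injective (FreeGroup.lift fun i : Fin n => β k ((i : ℕ) + 1)) :=
  stmt_15_general k n hk hn

end Stmt15
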